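/- arXiv:1408.3749 — 2 statements merged into one kernel-verified Lean document; each statement's English description precedes it below -/
import Mathlib

section
/- (Energy transformation of the acoustic system into right/left going modes) Let $\rho > 0$ be constant and $K(t,z) > 0$ be $C^1$. Suppose $(u, p)$ solves $\rho\, \partial_t u + \partial_z p = 0$ and $K^{-1} \partial_t p + \partial_z u = 0$ on an open set. Define $c = \sqrt{K/\rho}$, $\zeta = \rho c$, $A = \zeta^{-1/2} p + \zeta^{1/2} u$, and $B = -\zeta^{-1/2} p + \zeta^{1/2} u$. Then $A$ satisfies $\frac{1}{c} \partial_t A + \partial_z A = \left(\frac{\partial_z \zeta}{2\zeta} + \frac{\partial_t \zeta}{2 c \zeta}\right) B$ and $B$ satisfies $\frac{1}{c} \partial_t B - \partial_z B = \left(-\frac{\partial_z \zeta}{2\zeta} + \frac{\partial_t \zeta}{2 c \zeta}\right) A$. -/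
open Real

/-!
Write `s = √ζ`, so that `A, B = ±p / s + s u`. Differentiating,
`∂(±p / s + s u) = ±∂p / s + s ∂u + (∂ζ / 2ζ) (∓p / s + s u)`, and the last term is `∂ζ / 2ζ`
times the opposite mode. What remains, `c⁻¹ (±∂ₜp / s + s ∂ₜu) ± (±∂_z p / s + s ∂_z u)`,
vanishes by the acoustic equations, since `K = c ζ` and `ρ = ζ / c` with `ζ = s²`.
-/

section Slices

variable {𝕜 E F G : Type*} [NontriviallyNormedField 𝕜]
  [NormedAddCommGroup E] [NormedSpace 𝕜 E] [NormedAddCommGroup F] [NormedSpace 𝕜 F]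
  [NormedAddCommGroup G] [NormedSpace 𝕜 G] {f : E → F → G} {x : E} {y : F}

theorem DifferentiableAt.uncurry_left (hf : DifferentiableAt 𝕜 (Function.uncurry f) (x, y)) :
    DifferentiableAt 𝕜 (fun x' => f x' y) x :=
  hf.comp (f := fun x' => (x', y)) x (differentiableAt_id.prodMk (differentiableAt_const y))

theorem DifferentiableAt.uncurry_right (hf : DifferentiableAt 𝕜 (Function.uncurry f) (x, y)) :
    DifferentiableAt 𝕜 (fun y' => f x y') y :=
  hf.comp (f := fun y' => (x, y')) y ((differentiableAt_const x).prodMk differentiableAt_id)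

end Slices

section Modes

variable {p u ζ : ℝ → ℝ} {p' u' ζ' x : ℝ}

theorem HasDerivAt.div_sqrt (hp : HasDerivAt p p' x) (hζ : HasDerivAt ζ ζ' x) (hζ0 : 0 < ζ x) :
    HasDerivAt (fun x => p x / √(ζ x)) (p' / √(ζ x) - ζ' / (2 * ζ x) * (p x / √(ζ x))) x := by
  have hs : 0 < √(ζ x) := sqrt_pos.mpr hζ0
  refine (hp.div (hζ.sqrt hζ0.ne') hs.ne').congr_deriv ?_
  have hss := sq_sqrt hζ0.le
  generalize √(ζ x) = s at hs hss ⊢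
  rw [← hss]
  field_simp

theorem HasDerivAt.sqrt_mul (hu : HasDerivAt u u' x) (hζ : HasDerivAt ζ ζ' x) (hζ0 : 0 < ζ x) :
    HasDerivAt (fun x => √(ζ x) * u x) (√(ζ x) * u' + ζ' / (2 * ζ x) * (√(ζ x) * u x)) x := by
  have hs : 0 < √(ζ x) := sqrt_pos.mpr hζ0
  refine ((hζ.sqrt hζ0.ne').mul hu).congr_deriv ?_
  have hss := sq_sqrt hζ0.le
  generalize √(ζ x) = s at hs hss ⊢
  rw [← hss]
  field_simp
  ring

theorem deriv_div_sqrt_add_sqrt_mul (hp : DifferentiableAt ℝ p x) (hu : DifferentiableAt ℝ u x)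
    (hζ : DifferentiableAt ℝ ζ x) (hζ0 : 0 < ζ x) :
    deriv (fun x => p x / √(ζ x) + √(ζ x) * u x) x =
      deriv p x / √(ζ x) + √(ζ x) * deriv u x +
        deriv ζ x / (2 * ζ x) * (-(p x / √(ζ x)) + √(ζ x) * u x) :=
  ((hp.hasDerivAt.div_sqrt hζ.hasDerivAt hζ0).add
    (hu.hasDerivAt.sqrt_mul hζ.hasDerivAt hζ0)).deriv.trans (by ring)

theorem deriv_neg_div_sqrt_add_sqrt_mul (hp : DifferentiableAt ℝ p x)
    (hu : DifferentiableAt ℝ u x) (hζ : DifferentiableAt ℝ ζ x) (hζ0 : 0 < ζ x) :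
    deriv (fun x => -(p x / √(ζ x)) + √(ζ x) * u x) x =
      -(deriv p x / √(ζ x)) + √(ζ x) * deriv u x +
        deriv ζ x / (2 * ζ x) * (p x / √(ζ x) + √(ζ x) * u x) :=
  ((hp.hasDerivAt.div_sqrt hζ.hasDerivAt hζ0).neg.add
    (hu.hasDerivAt.sqrt_mul hζ.hasDerivAt hζ0)).deriv.trans (by ring)

end Modes

theorem acoustic_transport_eq_zero {ρ K c ζ pt pz ut uz : ℝ} (hc : c ≠ 0) (hζ : 0 < ζ)
    (hζρ : ζ = ρ * c) (hK : K = ρ * c ^ 2) (h1 : ρ * ut + pz = 0) (h2 : K⁻¹ * pt + uz = 0) :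
    c⁻¹ * (pt / √ζ + √ζ * ut) + (pz / √ζ + √ζ * uz) = 0 ∧
      c⁻¹ * (-(pt / √ζ) + √ζ * ut) - (-(pz / √ζ) + √ζ * uz) = 0 := by
  obtain rfl : ρ = ζ / c := by field_simp; linarith
  subst hK
  have hs : 0 < √ζ := sqrt_pos.mpr hζ
  have hss := sq_sqrt hζ.le
  generalize √ζ = s at hs hss ⊢
  subst hss
  have hut : ut = -(c * pz / s ^ 2) := by field_simp at h1 ⊢; linarith
  have hpt : pt = -(s ^ 2 * c * uz) := by field_simp at h2 ⊢; linarith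
  subst hut hpt
  constructor <;> field_simp <;> ring

/-- Transformation of the acoustic system into right/left going modes. -/
theorem stmt14 (ρ : ℝ) (hρ : 0 < ρ) (K u p c ζ A B : ℝ → ℝ → ℝ)
    (hKpos : ∀ t z, 0 < K t z)
    (hK : ContDiff ℝ 1 (Function.uncurry K))
    (hu : ContDiff ℝ 1 (Function.uncurry u))
    (hp : ContDiff ℝ 1 (Function.uncurry p))
    (heq1 : ∀ t z, ρ * deriv (fun t' => u t' z) t + deriv (fun z' => p t z') z = 0)
    (heq2 : ∀ t z, (K t z)⁻¹ * deriv (fun t' => p t' z) t + deriv (fun z' => u t z') z = 0)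
    (hc : ∀ t z, c t z = Real.sqrt (K t z / ρ))
    (hζ : ∀ t z, ζ t z = ρ * c t z)
    (hA : ∀ t z, A t z = p t z / Real.sqrt (ζ t z) + Real.sqrt (ζ t z) * u t z)
    (hB : ∀ t z, B t z = -(p t z / Real.sqrt (ζ t z)) + Real.sqrt (ζ t z) * u t z) :
    (∀ t z, (c t z)⁻¹ * deriv (fun t' => A t' z) t + deriv (fun z' => A t z') z =
      (deriv (fun z' => ζ t z') z / (2 * ζ t z) +
        deriv (fun t' => ζ t' z) t / (2 * c t z * ζ t z)) * B t z) ∧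
    (∀ t z, (c t z)⁻¹ * deriv (fun t' => B t' z) t - deriv (fun z' => B t z') z =
      (-(deriv (fun z' => ζ t z') z) / (2 * ζ t z) +
        deriv (fun t' => ζ t' z) t / (2 * c t z * ζ t z)) * A t z) := by
  have hKρ t z : 0 < K t z / ρ := div_pos (hKpos t z) hρ
  have hc0 t z : 0 < c t z := hc t z ▸ sqrt_pos.mpr (hKρ t z)
  have hζ0 t z : 0 < ζ t z := hζ t z ▸ mul_pos hρ (hc0 t z)
  have hKc t z : K t z = ρ * c t z ^ 2 := by rw [hc, sq_sqrt (hKρ t z).le]; field_simp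
  have hζC : ContDiff ℝ 1 (Function.uncurry ζ) := by
    have : Function.uncurry ζ = fun q => ρ * √(Function.uncurry K q / ρ) := by
      ext ⟨t, z⟩; simp only [Function.uncurry_apply_pair, hζ, hc]
    rw [this]
    exact contDiff_const.mul ((hK.div_const ρ).sqrt fun q => (hKρ q.1 q.2).ne')
  have hslices {F : ℝ → ℝ → ℝ} (hF : ContDiff ℝ 1 (Function.uncurry F)) t z :
      DifferentiableAt ℝ (fun t' => F t' z) t ∧ DifferentiableAt ℝ (fun z' => F t z') z :=
    have hF' := hF.differentiable one_ne_zero (t, z)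
    ⟨hF'.uncurry_left, hF'.uncurry_right⟩
  have htransport t z := acoustic_transport_eq_zero (hc0 t z).ne' (hζ0 t z) (hζ t z) (hKc t z)
    (heq1 t z) (heq2 t z)
  obtain rfl : A = _ := funext fun t => funext (hA t)
  obtain rfl : B = _ := funext fun t => funext (hB t)
  refine ⟨fun t z => ?_, fun t z => ?_⟩
  · rw [deriv_div_sqrt_add_sqrt_mul (hslices hp t z).1 (hslices hu t z).1 (hslices hζC t z).1
        (hζ0 t z),
      deriv_div_sqrt_add_sqrt_mul (hslices hp t z).2 (hslices hu t z).2 (hslices hζC t z).2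
        (hζ0 t z)]
    linear_combination (htransport t z).1
  · rw [deriv_neg_div_sqrt_add_sqrt_mul (hslices hp t z).1 (hslices hu t z).1
        (hslices hζC t z).1 (hζ0 t z),
      deriv_neg_div_sqrt_add_sqrt_mul (hslices hp t z).2 (hslices hu t z).2
        (hslices hζC t z).2 (hζ0 t z)]
    linear_combination (htransport t z).2
end

section
/- Let $\varPhi: \mathbb{R} \to \mathbb{R}$ be a twice continuously differentiable even autocorrelation with $\varPhi(0) = 1$, $\varPhi'(0)=0$, and $\varPhi, \varPhi', \varPhi''$ integrable with decay at infinity. Let $|v| < c_o$ and define $\gamma(\omega) = \frac{v^2 - c_o^2}{4\omega^2 c_o} \int_0^{\infty} \varPhi''((c_o + v)u)\, e^{2i\omega u}\, du$ for $\omega \ne 0$. Then $\gamma(\omega) = \frac{i(v - c_o)}{2\omega c_o (c_o + v)} + \frac{(c_o - v)}{2 c_o (c_o + v)^2} \hat{\varPhi}\left(\frac{2\omega}{c_o + v}\right) + i\, \frac{(c_o - v)}{c_o (c_o + v)^2} \int_0^{\infty} \varPhi(z) \sin\left(\frac{2\omega z}{c_o + v}\right) dz$, where $\hat{\varPhi}(k)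 = \int_{-\infty}^{\infty} \varPhi(z) e^{ikz} dz$ (real by evenness). -/
open MeasureTheory Filter Set Complex

/-!
Substituting `z = (c_o + v) u` turns the integral into `(c_o + v)⁻¹ ∫₀^∞ Φ''(z) e^{ikz} dz`
with `k = 2ω / (c_o + v)`. Integrating by parts twice, with boundary terms `Φ'(0) = 0` and
`Φ(0) = 1` at the origin and none at infinity (a function which is integrable together with its
derivative tends to `0`), gives `ik - k² ∫₀^∞ Φ(z) e^{ikz} dz`. The cosine part of this last
integral is half of `Φ̂(k)` because `Φ` is even; its sine part is the remaining term.
-/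

lemma norm_exp_I_mul_ofReal_mul_ofReal (k x : ℝ) : ‖exp (I * k * x)‖ = 1 := by
  rw [show I * k * x = ((k * x : ℝ) : ℂ) * I by push_cast; ring, norm_exp_ofReal_mul_I]

lemma MeasureTheory.Integrable.ofReal_mul_exp_I_mul {μ : Measure ℝ} {f : ℝ → ℝ}
    (hf : Integrable f μ) (k : ℝ) : Integrable (fun x ↦ (f x : ℂ) * exp (I * k * x)) μ :=
  hf.ofReal.mul_bdd (by fun_prop)
    (.of_forall fun x ↦ (norm_exp_I_mul_ofReal_mul_ofReal k x).le)

lemma integral_ofReal_mul_exp_I_mul {μ : Measure ℝ} {f : ℝ → ℝ} (hf : Integrable f μ)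
    (k : ℝ) :
    ∫ x, (f x : ℂ) * exp (I * k * x) ∂μ =
      ↑(∫ x, f x * Real.cos (k * x) ∂μ) + I * ↑(∫ x, f x * Real.sin (k * x) ∂μ) := by
  rw [← integral_re_add_im (hf.ofReal_mul_exp_I_mul k)]
  simp [exp_re, exp_im, mul_comm I]

lemma integral_eq_zero_of_odd {g : ℝ → ℝ} (hodd : ∀ x, g (-x) = -g x) : ∫ x, g x = 0 := by
  have h := integral_neg_eq_self g volume
  simp only [hodd, integral_neg] at h
  linarith

lemma integral_ofReal_mul_exp_I_mul_of_even {f : ℝ → ℝ} (hf : Integrable f)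
    (heven : ∀ x, f (-x) = f x) (k : ℝ) :
    ∫ x, (f x : ℂ) * exp (I * k * x) = 2 * ↑(∫ x in Ioi 0, f x * Real.cos (k * x)) := by
  have hsin : ∫ x, f x * Real.sin (k * x) = 0 :=
    integral_eq_zero_of_odd fun x ↦ by rw [heven, mul_neg, Real.sin_neg, mul_neg]
  have hcos : ∫ x, f x * Real.cos (k * x) = 2 * ∫ x in Ioi 0, f x * Real.cos (k * x) := by
    rw [← integral_comp_abs]
    congr 1 with x
    rcases abs_choice x with h | h <;> simp [h, heven]
  rw [integral_ofReal_mul_exp_I_mul hf, hsin, hcos]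
  push_cast
  ring

lemma integral_Ioi_deriv_mul_exp_I_mul {f f' : ℝ → ℝ}
    (hderiv : ∀ x ∈ Ici 0, HasDerivAt f (f' x) x)
    (hf : IntegrableOn f (Ioi 0)) (hf' : IntegrableOn f' (Ioi 0)) (k : ℝ) :
    ∫ x in Ioi (0 : ℝ), (f' x : ℂ) * exp (I * k * x) =
      -f 0 - I * k * ∫ x in Ioi (0 : ℝ), (f x : ℂ) * exp (I * k * x) := by
  set F : ℝ → ℂ := fun x ↦ (f x : ℂ) * exp (I * k * x)
  set F' : ℝ → ℂ := fun x ↦ (f' x : ℂ) * exp (I * k * x) + I * k * F x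
  have hFderiv : ∀ x ∈ Ici 0, HasDerivAt F (F' x) x := fun x hx ↦ by
    have he : HasDerivAt (fun x : ℝ ↦ exp (I * k * x)) (exp (I * k * x) * (I * k)) x := by
      simpa using ((hasDerivAt_id x).ofReal_comp.const_mul (I * k)).cexp
    exact ((hderiv x hx).ofReal_comp.mul he).congr_deriv (by simp only [F', F]; ring)
  have hFint : IntegrableOn F (Ioi 0) := hf.ofReal_mul_exp_I_mul k
  have hf'int : IntegrableOn (fun x ↦ (f' x : ℂ) * exp (I * k * x)) (Ioi 0) :=
    hf'.ofReal_mul_exp_I_mul k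
  have hF'int : IntegrableOn F' (Ioi 0) := hf'int.add (hFint.const_mul _)
  have hFlim : Tendsto F atTop (nhds 0) :=
    tendsto_zero_of_hasDerivAt_of_integrableOn_Ioi
      (fun x hx ↦ hFderiv x (mem_Ici_of_Ioi hx)) hF'int hFint
  have h := integral_Ioi_of_hasDerivAt_of_tendsto' hFderiv hF'int hFlim
  rw [integral_add hf'int (hFint.const_mul _), integral_const_mul] at h
  simp only [F, ofReal_zero, mul_zero, exp_zero, mul_one, zero_sub] at h
  linear_combination h

lemma integral_Ioi_comp_mul_left_mul_exp_I_mul (g : ℝ → ℝ) {a : ℝ} (ha : 0 < a) (k : ℝ) :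
    ∫ u in Ioi (0 : ℝ), (g (a * u) : ℂ) * exp (I * k * u) =
      (a : ℂ)⁻¹ * ∫ z in Ioi (0 : ℝ), (g z : ℂ) * exp (I * ↑(k / a) * z) := by
  have h := integral_comp_mul_left_Ioi (fun z ↦ (g z : ℂ) * exp (I * ↑(k / a) * z)) 0 ha
  simp only [mul_zero, real_smul, ofReal_inv] at h
  rw [← h]
  congr 1 with u
  push_cast
  field_simp [ha.ne']

theorem stmt15_general (Φ : ℝ → ℝ) (hΦ : ContDiff ℝ 2 Φ) (heven : ∀ z : ℝ, Φ (-z) = Φ z)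
    (h0 : Φ 0 = 1) (h0' : deriv Φ 0 = 0)
    (hi : Integrable Φ) (hi' : Integrable (deriv Φ)) (hi'' : Integrable (deriv (deriv Φ)))
    (c_o v : ℝ) (hc : 0 < c_o) (hv : |v| < c_o)
    (γ : ℝ → ℂ)
    (hγ : ∀ ω : ℝ, ω ≠ 0 → γ ω = (((v ^ 2 - c_o ^ 2) / (4 * ω ^ 2 * c_o) : ℝ) : ℂ) *
      ∫ u in Ioi (0:ℝ), ((deriv (deriv Φ) ((c_o + v) * u) : ℝ) : ℂ) *
        Complex.exp (2 * Complex.I * ω * u))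
    (Φhat : ℝ → ℂ)
    (hΦhat : ∀ k : ℝ, Φhat k = ∫ z : ℝ, (Φ z : ℂ) * Complex.exp (Complex.I * k * z)) :
    ∀ ω : ℝ, ω ≠ 0 →
      γ ω = Complex.I * (((v - c_o) / (2 * ω * c_o * (c_o + v)) : ℝ) : ℂ)
        + (((c_o - v) / (2 * c_o * (c_o + v) ^ 2) : ℝ) : ℂ) * Φhat (2 * ω / (c_o + v))
        + Complex.I * (((c_o - v) / (c_o * (c_o + v) ^ 2) : ℝ) : ℂ) *
            ((∫ z in Ioi (0:ℝ), Φ z * Real.sin (2 * ω * z / (c_o + v)) : ℝ) : ℂ) := by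
  intro ω hω
  have ha : 0 < c_o + v := by linarith [neg_abs_le v]
  have hΦ' : ∀ x ∈ Ici (0 : ℝ), HasDerivAt Φ (deriv Φ x) x := fun x _ ↦
    (hΦ.differentiable two_ne_zero x).hasDerivAt
  have hΦ'' : ∀ x ∈ Ici (0 : ℝ), HasDerivAt (deriv Φ) (deriv (deriv Φ) x) x := fun x _ ↦
    ((hΦ.iterate_deriv' 1 1).differentiable one_ne_zero x).hasDerivAt
  have h2ω : ∀ u : ℝ, 2 * I * ω * u = I * ↑(2 * ω) * u := fun u ↦ by push_cast; ring
  have hsin : ∫ z in Ioi 0, Φ z * Real.sin (2 * ω * z / (c_o + v)) =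
      ∫ z in Ioi 0, Φ z * Real.sin (2 * ω / (c_o + v) * z) := by
    congr 1 with z
    rw [mul_div_right_comm]
  rw [hγ ω hω]
  simp only [h2ω]
  rw [integral_Ioi_comp_mul_left_mul_exp_I_mul _ ha,
    integral_Ioi_deriv_mul_exp_I_mul hΦ'' hi'.integrableOn hi''.integrableOn,
    integral_Ioi_deriv_mul_exp_I_mul hΦ' hi.integrableOn hi'.integrableOn,
    integral_ofReal_mul_exp_I_mul hi.integrableOn, hΦhat,
    integral_ofReal_mul_exp_I_mul_of_even hi heven, hsin, h0, h0']
  have hc' : (c_o : ℂ) ≠ 0 := ofReal_ne_zero.2 hc.ne'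
  have ha' : (c_o : ℂ) + v ≠ 0 := by exact_mod_cast ha.ne'
  have hω' : (ω : ℂ) ≠ 0 := ofReal_ne_zero.2 hω
  generalize ∫ z in Ioi 0, Φ z * Real.cos (2 * ω / (c_o + v) * z) = Mc
  generalize ∫ z in Ioi 0, Φ z * Real.sin (2 * ω / (c_o + v) * z) = Ms
  push_cast
  field_simp
  linear_combination 8 * ω ^ 2 * (v ^ 2 - c_o ^ 2) * (Mc + I * Ms) * I_sq

/-- Decomposition of the pulse-shaping exponent for a medium in uniform
translational motion. -/
theorem stmt15 (Φ : ℝ → ℝ) (hΦ : ContDiff ℝ 2 Φ) (heven : ∀ z : ℝ, Φ (-z) = Φ z)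
    (h0 : Φ 0 = 1) (h0' : deriv Φ 0 = 0)
    (hi : Integrable Φ) (hi' : Integrable (deriv Φ)) (hi'' : Integrable (deriv (deriv Φ)))
    (hlim : Tendsto Φ atTop (nhds 0)) (hlim' : Tendsto (deriv Φ) atTop (nhds 0))
    (c_o v : ℝ) (hc : 0 < c_o) (hv : |v| < c_o)
    (γ : ℝ → ℂ)
    (hγ : ∀ ω : ℝ, ω ≠ 0 → γ ω = (((v ^ 2 - c_o ^ 2) / (4 * ω ^ 2 * c_o) : ℝ) : ℂ) *
      ∫ u in Ioi (0:ℝ), ((deriv (deriv Φ) ((c_o + v) * u) : ℝ) : ℂ) *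
        Complex.exp (2 * Complex.I * ω * u))
    (Φhat : ℝ → ℂ)
    (hΦhat : ∀ k : ℝ, Φhat k = ∫ z : ℝ, (Φ z : ℂ) * Complex.exp (Complex.I * k * z)) :
    ∀ ω : ℝ, ω ≠ 0 →
      γ ω = Complex.I * (((v - c_o) / (2 * ω * c_o * (c_o + v)) : ℝ) : ℂ)
        + (((c_o - v) / (2 * c_o * (c_o + v) ^ 2) : ℝ) : ℂ) * Φhat (2 * ω / (c_o + v))
        + Complex.I * (((c_o - v) / (c_o * (c_o + v) ^ 2) : ℝ) : ℂ) *
            ((∫ z in Ioi (0:ℝ), Φ z * Real.sin (2 * ω * z / (c_o + v)) : ℝ) : ℂ) :=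
  stmt15_general Φ hΦ heven h0 h0' hi hi' hi'' c_o v hc hv γ hγ Φhat hΦhat
end
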